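/- Let k be an even positive integer and H > 1 a real constant. Define cost vectors c^t ∈ ℝ^k for t = 1,…,k/2 by c^t_i = 0 if i ∈ {2t−1, 2t} and c^t_i = H otherwise. Then for every deterministic prediction algorithm A — i.e., every family of functions that, at each step t, outputs a predicted arm p_t ∈ {1,…,k} as a function of the cost vectors c^1,…,c^t and the agent's past actions a_1,…,a_{t−1} — there exist a value vector v* ∈ {0,1}^k with exactly one coordinate of each pair {2t−1, 2t} equal to 1, and an agent action sequence a_1,…,a_{k/2} achieving zero total regret (a_t = argmax_i (v*_i − c^t_i) for all t), such that the algorithm's total regret satisfies ∑_{t ≤ k/2} pr_t ≥ k/4, where pr_t = max_i (v*_i − c^t_i) − (v*_{p_t} − c^t_{p_t}). -/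

import Mathlib

/-- The cost sequence of the lower-bound construction: at (0-indexed) time step `t`,
the two arms of the `t`-th pair (indices `2t` and `2t+1`) have cost `0` and every other
arm has cost `H`. -/
def lbCost (k : ℕ) (H : ℝ) : ℕ → Fin k → ℝ := fun t i =>
  if (i : ℕ) = 2 * t ∨ (i : ℕ) = 2 * t + 1 then 0 else H

/-!
The adversary answers the predictor online: at step `t` only the pair `{2t, 2t+1}` has cost `0`,
and the agent plays the arm of that pair which the predictor did not name. Giving that arm
value `1` and its partner value `0` makes the agent optimal with gain `1`, while the predicted
arm gains at most `0`: either it is the worthless partner, or it lies outside the pair and costs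
`H ≥ 1`. So every one of the `k/2` steps costs the predictor at least `1`. The agent's play is
well defined because the prediction at step `t` only sees the agent's actions before `t`.
-/

theorem exists_seq_responding_of_causal {α β : Type*} [Nonempty α] (P : ℕ → (ℕ → α) → β)
    (hP : ∀ t a a', (∀ s < t, a s = a' s) → P t a = P t a')
    (R : ℕ → β → α → Prop) (hR : ∀ t b, ∃ x, R t b x) :
    ∃ a : ℕ → α, ∀ t, R t (P t a) (a t) := by
  choose f hf using hR
  let a : ℕ → α := Nat.strongRec
    fun t prev => f t (P t fun s => if h : s < t then prev s h else Classical.arbitrary α)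
  have ha : ∀ t, a t = f t (P t a) := fun t => by
    rw [show a t = _ from Nat.strongRec_eq ..]
    exact congrArg (f t) (hP t _ _ fun s hs => dif_pos hs)
  exact ⟨a, fun t => ha t ▸ hf t _⟩

theorem exists_div_two_eq_and_ne {k t : ℕ} (ht : t < k / 2) (p : Fin k) :
    ∃ i : Fin k, (i : ℕ) / 2 = t ∧ i ≠ p := by
  by_cases hp : (p : ℕ) = 2 * t
  · exact ⟨⟨2 * t + 1, by omega⟩, show (2 * t + 1) / 2 = t by omega, fun h => by simp [← h] at hp⟩
  · exact ⟨⟨2 * t, by omega⟩, show 2 * t / 2 = t by omega, fun h => hp (by simp [← h])⟩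

section LowerBound

variable {k : ℕ} {H : ℝ} {t : ℕ}

theorem lbCost_nonneg (hH : 0 ≤ H) (t : ℕ) (i : Fin k) : 0 ≤ lbCost k H t i := by
  unfold lbCost; split_ifs <;> simp [hH]

theorem lbCost_of_div_two_eq {i : Fin k} (hi : (i : ℕ) / 2 = t) : lbCost k H t i = 0 :=
  if_pos (by omega)

theorem lbCost_of_div_two_ne {i : Fin k} (hi : (i : ℕ) / 2 ≠ t) : lbCost k H t i = H :=
  if_neg (by omega)

def chosenArmValue (a : ℕ → Fin k) (i : Fin k) : ℝ :=
  if a ((i : ℕ) / 2) = i then 1 else 0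

variable {a : ℕ → Fin k}

theorem chosenArmValue_eq_zero_or_one (i : Fin k) :
    chosenArmValue a i = 0 ∨ chosenArmValue a i = 1 := by
  unfold chosenArmValue; split_ifs <;> simp

theorem chosenArmValue_le_one (i : Fin k) : chosenArmValue a i ≤ 1 := by
  rcases chosenArmValue_eq_zero_or_one (a := a) i with h | h <;> simp [h]

theorem chosenArmValue_self (ha : (a t : ℕ) / 2 = t) : chosenArmValue a (a t) = 1 := by
  simp [chosenArmValue, ha]

theorem chosenArmValue_of_ne {i : Fin k} (hi : (i : ℕ) / 2 = t)
    (hne : i ≠ a t) : chosenArmValue a i = 0 := by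
  simp [chosenArmValue, hi, Ne.symm hne]

theorem chosenArmValue_pair_add (ha : (a t : ℕ) / 2 = t) (h1 : 2 * t < k) (h2 : 2 * t + 1 < k) :
    chosenArmValue a ⟨2 * t, h1⟩ + chosenArmValue a ⟨2 * t + 1, h2⟩ = 1 := by
  have hval : (a t : ℕ) = 2 * t ∨ (a t : ℕ) = 2 * t + 1 := by omega
  rcases hval with h | h
  · rw [show (⟨2 * t, h1⟩ : Fin k) = a t from Fin.ext h.symm, chosenArmValue_self ha,
      chosenArmValue_of_ne (show (2 * t + 1) / 2 = t by omega)
      (Fin.ne_of_val_ne (show 2 * t + 1 ≠ (a t : ℕ) by omega))]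
    norm_num
  · rw [show (⟨2 * t + 1, h2⟩ : Fin k) = a t from Fin.ext h.symm, chosenArmValue_self ha,
      chosenArmValue_of_ne (show 2 * t / 2 = t by omega)
      (Fin.ne_of_val_ne (show 2 * t ≠ (a t : ℕ) by omega))]
    norm_num

theorem chosenArmValue_sub_lbCost_le_one (hH : 0 ≤ H) (i : Fin k) :
    chosenArmValue a i - lbCost k H t i ≤ 1 := by
  linarith [chosenArmValue_le_one (a := a) i, lbCost_nonneg hH t i]

theorem chosenArmValue_sub_lbCost_self (ha : (a t : ℕ) / 2 = t) :
    chosenArmValue a (a t) - lbCost k H t (a t) = 1 := by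
  rw [chosenArmValue_self ha, lbCost_of_div_two_eq ha, sub_zero]

theorem chosenArmValue_sub_lbCost_nonpos (hH : 1 ≤ H) {p : Fin k}
    (hp : p ≠ a t) : chosenArmValue a p - lbCost k H t p ≤ 0 := by
  by_cases hpt : (p : ℕ) / 2 = t
  · rw [chosenArmValue_of_ne hpt hp, lbCost_of_div_two_eq hpt, sub_zero]
  · linarith [chosenArmValue_le_one (a := a) p, lbCost_of_div_two_ne (H := H) hpt]

theorem iSup_chosenArmValue_sub_lbCost (hH : 0 ≤ H) (ha : (a t : ℕ) / 2 = t) :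
    ⨆ i, (chosenArmValue a i - lbCost k H t i) = 1 := by
  have : Nonempty (Fin k) := ⟨a t⟩
  refine le_antisymm (ciSup_le (chosenArmValue_sub_lbCost_le_one hH)) ?_
  rw [← chosenArmValue_sub_lbCost_self (H := H) ha]
  exact le_ciSup (f := fun i => chosenArmValue a i - lbCost k H t i)
    (Set.finite_range _).bddAbove (a t)

theorem one_le_regret (hH : 1 ≤ H) (ha : (a t : ℕ) / 2 = t) {p : Fin k} (hp : p ≠ a t) :
    1 ≤ (⨆ i, (chosenArmValue a i - lbCost k H t i)) - (chosenArmValue a p - lbCost k H t p) := by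
  rw [iSup_chosenArmValue_sub_lbCost (by linarith) ha]
  linarith [chosenArmValue_sub_lbCost_nonpos hH hp]

end LowerBound

/-- Theorem 3 (lower bound): for every deterministic prediction algorithm `A` — mapping,
at each step `t`, the costs up to time `t` and the agent's actions before time `t` to a
predicted arm — there exist a 0/1 value vector `v*` with exactly one `1` in each pair
`{2t, 2t+1}` and a zero-regret agent action sequence such that the algorithm's total
prediction regret over the first `k/2` steps is at least `k/4`. -/
theorem stmt_10 (k : ℕ) (hk : 0 < k) (hkeven : Even k) (H : ℝ) (hH : 1 < H)
    (A : ℕ → (ℕ → Fin k → ℝ) → (ℕ → Fin k) → Fin k)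
    (hA : ∀ (t : ℕ) (c c' : ℕ → Fin k → ℝ) (a a' : ℕ → Fin k),
      (∀ s, s ≤ t → c s = c' s) → (∀ s, s < t → a s = a' s) → A t c a = A t c' a') :
    ∃ (vstar : Fin k → ℝ) (a : ℕ → Fin k),
      (∀ i, vstar i = 0 ∨ vstar i = 1) ∧
      (∀ t, t < k / 2 → ∀ (h1 : 2 * t < k) (h2 : 2 * t + 1 < k),
        vstar ⟨2 * t, h1⟩ + vstar ⟨2 * t + 1, h2⟩ = 1) ∧
      (∀ t, t < k / 2 → ∀ i,
        vstar (a t) - lbCost k H t (a t) ≥ vstar i - lbCost k H t i) ∧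
      (k : ℝ) / 4 ≤ ∑ t ∈ Finset.range (k / 2),
        ((⨆ i, (vstar i - lbCost k H t i))
          - (vstar (A t (lbCost k H) a) - lbCost k H t (A t (lbCost k H) a))) := by
  have hresponse : ∀ t (p : Fin k), ∃ x : Fin k, t < k / 2 → (x : ℕ) / 2 = t ∧ x ≠ p := by
    intro t p
    by_cases ht : t < k / 2
    · obtain ⟨x, hx⟩ := exists_div_two_eq_and_ne ht p
      exact ⟨x, fun _ => hx⟩
    · exact ⟨⟨0, hk⟩, fun h => absurd h ht⟩
  have : Nonempty (Fin k) := ⟨⟨0, hk⟩⟩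
  obtain ⟨a, ha⟩ := exists_seq_responding_of_causal (fun t => A t (lbCost k H))
    (fun t _ _ h => hA t _ _ _ _ (fun _ _ => rfl) h) _ hresponse
  refine ⟨chosenArmValue a, a, chosenArmValue_eq_zero_or_one,
    fun t ht => chosenArmValue_pair_add (ha t ht).1, fun t ht i => ?_, ?_⟩
  · rw [ge_iff_le, chosenArmValue_sub_lbCost_self (ha t ht).1]
    exact chosenArmValue_sub_lbCost_le_one (by linarith) i
  · obtain ⟨m, rfl⟩ := hkeven
    calc ((m + m : ℕ) : ℝ) / 4 ≤ ∑ t ∈ Finset.range ((m + m) / 2), (1 : ℝ) := by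
          rw [Finset.sum_const, Finset.card_range, show (m + m) / 2 = m by omega, nsmul_one]
          push_cast
          linarith [(Nat.cast_nonneg m : (0 : ℝ) ≤ m)]
      _ ≤ _ := Finset.sum_le_sum fun t ht =>
          one_le_regret hH.le (ha t (Finset.mem_range.mp ht)).1
            (ha t (Finset.mem_range.mp ht)).2.symm
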